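/- Let A be a nontrivial commutative group containing an element of finite order m ≥ 2. Then the augmentation ideal of the integral group ring ℤ[A] is not nilpotent. (Key step: the ring ℤ[t]/⟨t^m − 1⟩ is reduced.) -/

import Mathlib

/-- The augmentation map of the integral group ring `ℤ[A]`. -/
noncomputable def aug (A : Type*) [AddCommGroup A] : AddMonoidAlgebra ℤ A →ₐ[ℤ] ℤ :=
  (AddMonoidAlgebra.lift ℤ ℤ A) 1

/-- The augmentation ideal of `ℤ[A]`. -/
noncomputable def augIdeal (A : Type*) [AddCommGroup A] : Ideal (AddMonoidAlgebra ℤ A) :=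
  RingHom.ker (aug A).toRingHom

/-!
Let `u = [a]`, of order `m`, and `x = u - 1`. Then `x` kills the norm element
`∑_{k<m} uᵏ = m + s x`, so `m • x = x² (-s)`, and iterating gives `mⁿ • x ∈ xⁿ⁺¹ ℤ[A]`.
If `x` were nilpotent this would force `mⁿ • x = 0`, hence `x = 0` because `ℤ[A]` is
torsion-free, i.e. `a = 0`. So `[a] - 1` is a non-nilpotent element of the augmentation ideal.
-/

open AddMonoidAlgebra

theorem Ideal.pow_ne_bot_of_mem_of_not_isNilpotent {R : Type*} [CommSemiring R] {I : Ideal R}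
    {x : R} (hx : x ∈ I) (hnil : ¬IsNilpotent x) (n : ℕ) : I ^ n ≠ ⊥ :=
  fun h ↦ hnil ⟨n, by simpa [h] using Ideal.pow_mem_pow hx n⟩

section TorsionFree

variable {R : Type*} [CommRing R] [IsAddTorsionFree R]

theorem eq_zero_of_isNilpotent_of_nsmul_eq_sq_mul {x y : R} {m : ℕ} (hm : m ≠ 0)
    (h : m • x = x ^ 2 * y) (hx : IsNilpotent x) : x = 0 := by
  have hpow (k : ℕ) : m ^ k • x = x ^ (k + 1) * y ^ k := by
    induction k with
    | zero => simp
    | succ k ih =>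
      calc m ^ (k + 1) • x = x ^ k * y ^ k * (m • x) := by
            rw [pow_succ', mul_smul, ih, mul_smul_comm]; ring
        _ = x ^ (k + 2) * y ^ (k + 1) := by rw [h]; ring
  obtain ⟨n, hn⟩ := hx
  have hzero : m ^ n • x = m ^ n • 0 := by rw [hpow, pow_succ, hn]; simp
  exact nsmul_right_injective (pow_ne_zero n hm) hzero

theorem eq_one_of_pow_eq_one_of_isNilpotent_sub_one {u : R} {m : ℕ} (hm : m ≠ 0)
    (hu : u ^ m = 1) (hnil : IsNilpotent (u - 1)) : u = 1 := by
  have hnorm : ∑ k ∈ Finset.range m, u ^ k =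
      m + (∑ k ∈ Finset.range m, ∑ i ∈ Finset.range k, u ^ i) * (u - 1) := by
    rw [Finset.sum_mul]
    simp only [geom_sum_mul, Finset.sum_sub_distrib]
    simp
  have h : m • (u - 1) = (u - 1) ^ 2 * -∑ k ∈ Finset.range m, ∑ i ∈ Finset.range k, u ^ i := by
    have hkill := mul_geom_sum u m
    rw [hu, sub_self, hnorm] at hkill
    rw [nsmul_eq_mul]
    linear_combination hkill
  exact sub_eq_zero.mp (eq_zero_of_isNilpotent_of_nsmul_eq_sq_mul hm h hnil)

end TorsionFree

namespace AddMonoidAlgebra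

instance instIsAddTorsionFree {R M : Type*} [Semiring R] [IsAddTorsionFree R] :
    IsAddTorsionFree (AddMonoidAlgebra R M) :=
  .of_isTorsionFree ℕ _

theorem not_isNilpotent_single_sub_one {R M : Type*} [CommRing R] [Nontrivial R]
    [IsAddTorsionFree R] [AddCommMonoid M] {a : M} (ha : IsOfFinAddOrder a) (ha0 : a ≠ 0) :
    ¬IsNilpotent (single a 1 - 1 : AddMonoidAlgebra R M) := by
  intro hnil
  have hpow : (single a 1 : AddMonoidAlgebra R M) ^ addOrderOf a = 1 := by
    rw [single_pow, addOrderOf_nsmul_eq_zero, one_pow, one_def]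
  have hone := eq_one_of_pow_eq_one_of_isNilpotent_sub_one ha.addOrderOf_pos.ne' hpow hnil
  rw [one_def, single_left_inj one_ne_zero] at hone
  exact ha0 hone

end AddMonoidAlgebra

theorem single_sub_one_mem_augIdeal (A : Type*) [AddCommGroup A] (a : A) :
    single a 1 - 1 ∈ augIdeal A := by
  simp [augIdeal, aug, RingHom.mem_ker, one_def]

theorem augIdeal_int_not_nilpotent_general (A : Type*) [AddCommGroup A]
    (a : A) (m : ℕ) (hm : 2 ≤ m) (ha : addOrderOf a = m) :
    ∀ n : ℕ, 0 < n → augIdeal A ^ n ≠ ⊥ := by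
  intro n _
  have hfin : IsOfFinAddOrder a := addOrderOf_pos_iff.mp (by omega)
  have ha0 : a ≠ 0 := by
    rintro rfl
    simp only [addOrderOf_zero] at ha
    omega
  exact Ideal.pow_ne_bot_of_mem_of_not_isNilpotent (single_sub_one_mem_augIdeal A a)
    (not_isNilpotent_single_sub_one hfin ha0) n

/-- If `A` contains an element of finite order `m ≥ 2`, then the augmentation ideal of the
integral group ring `ℤ[A]` is not nilpotent. -/
theorem augIdeal_int_not_nilpotent (A : Type*) [AddCommGroup A] [Nontrivial A]
    (a : A) (m : ℕ) (hm : 2 ≤ m) (ha : addOrderOf a = m) :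
    ∀ n : ℕ, 0 < n → augIdeal A ^ n ≠ ⊥ :=
  augIdeal_int_not_nilpotent_general A a m hm ha
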